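/- arXiv:0808.3741 — 2 statements merged into one kernel-verified Lean document; each statement's English description precedes it below -/
import Mathlib

section
/- Let N ≥ 1 and let (τ^j, ℓ^j), j = 1,…,N, and complex coordinates s^κ, κ = 1,…,N, be two smooth coordinate systems on a real 2N-dimensional manifold, with G a Hermitian metric in the s-coordinates. Suppose for all j, κ: ∂ℓ^j/∂s̄^κ = -i ⟨∂/∂τ^j, μ_κ⟩ and ∂ℓ^j/∂s^κ = i ⟨μ_κ, ∂/∂τ^j⟩ (where ⟨·,·⟩ denotes the sesquilinear extension of G to the complexified tangent space and μ_κ corresponds to ∂/∂s^κ), and suppose the coefficient of dℓ^k ∧ dℓ^m in ω^{WP} = i G_{κλ̄} ds^κ ∧ ds̄^λ vanishes. Then ω^{WP} = -Σ_j dτ^j ∧ dℓ^j. -/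
/-!
The form `ω(u, v) = -2 Im⟨u, v⟩` is real bilinear and alternating. Equations (16)–(17) say
exactly that `ω(·, T_j) = dℓ^j`; expanding the second slot of `ω(L_j, ·)` in the basis and
using `ω(L_j, L_k) = 0` then gives `ω(L_j, ·) = dτ^j`. Knowing `ω` against every basis vector
in one slot determines it, and antisymmetry turns the two identities into
`ω = -Σ_j dτ^j ∧ dℓ^j`.
-/

open Complex Finset

namespace LinearMap.BilinForm

open LinearMap (BilinForm)

variable {R M ι : Type*} [CommRing R] [AddCommGroup M] [Module R M] [Fintype ι] [DecidableEq ι]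
  {T L : ι → M} {dτ dℓ : ι → M →ₗ[R] R}

theorem apply_left_eq_of_darboux (ω : BilinForm R M)
    (hspan : ∀ v, v = ∑ j, dτ j v • T j + ∑ j, dℓ j v • L j)
    (hdualLL : ∀ j k, dℓ j (L k) = if j = k then 1 else 0)
    (hωT : ∀ u j, ω u (T j) = dℓ j u) (hωL : ∀ j k, ω (L j) (L k) = 0) (j : ι) (u : M) :
    ω (L j) u = dτ j u := by
  conv_lhs => rw [hspan u]
  simp [map_sum, hωT, hωL, hdualLL]

theorem IsAlt.apply_eq_neg_sum_of_darboux {ω : BilinForm R M} (hω : ω.IsAlt)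
    (hspan : ∀ v, v = ∑ j, dτ j v • T j + ∑ j, dℓ j v • L j)
    (hdualLL : ∀ j k, dℓ j (L k) = if j = k then 1 else 0)
    (hωT : ∀ u j, ω u (T j) = dℓ j u) (hωL : ∀ j k, ω (L j) (L k) = 0) (u v : M) :
    ω u v = -∑ j, (dτ j u * dℓ j v - dτ j v * dℓ j u) := by
  have hωL' : ∀ j, ω u (L j) = -dτ j u := fun j => by
    rw [← hω.neg_eq, ω.apply_left_eq_of_darboux hspan hdualLL hωT hωL]
  conv_lhs => rw [hspan v]
  simp only [map_add, map_sum, map_smul, hωT, hωL', smul_eq_mul, ← sum_add_distrib,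
    ← sum_neg_distrib]
  exact sum_congr rfl fun j _ => by ring

end LinearMap.BilinForm

section FundamentalForm

variable (V : Type*) [NormedAddCommGroup V] [InnerProductSpace ℂ V]

/-- In the paper's convention `⟨u, v⟩ = ⟪v, u⟫`, this is `ω(u, v) = -2 Im⟨u, v⟩`. -/
noncomputable def fundamentalForm : LinearMap.BilinForm ℝ V :=
  LinearMap.mk₂ ℝ (fun u v => -2 * (inner ℂ v u).im)
    (fun _ _ _ => by simp; ring)
    (fun _ _ _ => by simp; ring)
    (fun _ _ _ => by simp; ring)
    (fun _ _ _ => by simp; ring)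

theorem fundamentalForm_apply (u v : V) : fundamentalForm V u v = -2 * (inner ℂ v u).im :=
  rfl

theorem isAlt_fundamentalForm : (fundamentalForm V).IsAlt := fun v => by
  simp [fundamentalForm_apply, ← ofReal_pow]

end FundamentalForm

theorem fenchelNielsen_eq_weilPetersson_core_general
    (N : ℕ)
    (V : Type*) [NormedAddCommGroup V] [InnerProductSpace ℂ V]
    (T L : Fin N → V) (dτ dℓ : Fin N → V →ₗ[ℝ] ℝ)
    (hdualLL : ∀ j k, dℓ j (L k) = if j = k then (1:ℝ) else 0)
    (hspan : ∀ v : V, v = (∑ j, dτ j v • T j) + ∑ j, dℓ j v • L j)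
    (lam : Fin N → V →ₗ[ℂ] ℂ)
    (hre : ∀ j (v : V), dℓ j v = 2 * (lam j v).re)
    (hpair : ∀ j (v : V), lam j v = Complex.I * (inner ℂ (T j) v : ℂ))
    (hLL : ∀ j k, -2 * (inner ℂ (L k) (L j) : ℂ).im = 0) :
    ∀ u v : V,
      -2 * (inner ℂ v u : ℂ).im = -∑ j, (dτ j u * dℓ j v - dτ j v * dℓ j u) := by
  have hωT : ∀ u j, fundamentalForm V u (T j) = dℓ j u := fun u j => by
    simp [fundamentalForm_apply, hre, hpair]
  exact (isAlt_fundamentalForm V).apply_eq_neg_sum_of_darboux hspan hdualLL hωT hLL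

/-- Linear-algebraic core of `ω^{FN} = ω^{WP}` (Theorem 1.3).  `V` is the complexified
tangent space with Hermitian product `⟨u,v⟩ = ⟪v,u⟫` (linear in the first paper-slot);
`T j, L j` are the twist and length coordinate vectors `∂/∂τ^j, ∂/∂ℓ^j` with dual basis
`dτ^j, dℓ^j`; `λ j` is the `(1,0)`-part of `dℓ^j`.  The hypotheses `hpair` and `hre`
encode equations (16)–(17) (`∂ℓ^j/∂s^κ = i⟨μ_κ, ∂/∂τ^j⟩`), and `hLL` the vanishing of the
`dℓ^k ∧ dℓ^m`-coefficients of `ω^{WP}`.  Conclusion: `ω^{WP} = -Σ_j dτ^j ∧ dℓ^j`. -/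
theorem fenchelNielsen_eq_weilPetersson_core
    (N : ℕ) (hN : 1 ≤ N)
    (V : Type*) [NormedAddCommGroup V] [InnerProductSpace ℂ V]
    (hdim : Module.finrank ℂ V = N)
    (T L : Fin N → V) (dτ dℓ : Fin N → V →ₗ[ℝ] ℝ)
    (hdualTT : ∀ j k, dτ j (T k) = if j = k then (1:ℝ) else 0)
    (hdualTL : ∀ j k, dτ j (L k) = 0)
    (hdualLT : ∀ j k, dℓ j (T k) = 0)
    (hdualLL : ∀ j k, dℓ j (L k) = if j = k then (1:ℝ) else 0)
    (hspan : ∀ v : V, v = (∑ j, dτ j v • T j) + ∑ j, dℓ j v • L j)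
    (lam : Fin N → V →ₗ[ℂ] ℂ)
    (hre : ∀ j (v : V), dℓ j v = 2 * (lam j v).re)
    (hpair : ∀ j (v : V), lam j v = Complex.I * (inner ℂ (T j) v : ℂ))
    (hLL : ∀ j k, -2 * (inner ℂ (L k) (L j) : ℂ).im = 0) :
    ∀ u v : V,
      -2 * (inner ℂ v u : ℂ).im = -∑ j, (dτ j u * dℓ j v - dτ j v * dℓ j u) :=
  fenchelNielsen_eq_weilPetersson_core_general N V T L dτ dℓ hdualLL hspan lam hre hpair hLL
end

section
/- Under the hypotheses of the previous setting (equation ∂ℓ^j/∂s^κ = i⟨μ_κ, ∂/∂τ^j⟩ for all κ), the real part of i ⟨∂/∂s^α, ∂/∂s^β⟩ (∂s^α/∂τ^j)(∂s̄^β/∂τ^k) vanishes; equivalently, the restriction of the Weil-Petersson symplectic form to the span of the twist vectors ∂/∂τ^j is zero (the twist vectors span a Lagrangian-type isotropic subspace for ω^{WP}). -/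
open Complex

/-- `⟨u,v⟩ = ⟪v,u⟫` is the paper's Hermitian product and `lam j` is the `(1,0)`-part of the
length differential, so `dℓ^j = 2 Re (lam j)`. -/
theorem twist_vectors_isotropic
    (N : ℕ) (V : Type*) [NormedAddCommGroup V] [InnerProductSpace ℂ V]
    (T : Fin N → V) (lam : Fin N → V →ₗ[ℂ] ℂ)
    (hpair : ∀ j (v : V), lam j v = Complex.I * (inner ℂ (T j) v : ℂ))
    (hzero : ∀ j k, 2 * (lam j (T k)).re = 0) :
    ∀ j k, -2 * (inner ℂ (T k) (T j) : ℂ).im = 0 := by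
  intro j k
  -- `T k` is the Hamiltonian vector field of `ℓ^k`: `ω(T j, T k) = dℓ^k (T j)`.
  calc -2 * (inner ℂ (T k) (T j) : ℂ).im = 2 * (lam k (T j)).re := by
        rw [hpair, I_mul_re]; ring
    _ = 0 := hzero k j
end
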